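/- Let H be a complex Hilbert space, D ⊆ H a linear subspace, and X_1,…,X_n linear operators mapping D into D, each of which is Hermitian or skew-Hermitian on D. Let m^{(1)},…,m^{(n)} be sequences of positive reals satisfying (A0), (A1) and (A2), and suppose that for every j ∈ {1,…,n−1} the pair (m^{(j)}, m^{(n)}) satisfies (A3) and the commutator satisfies [X_j, X_n] = c_j·I on D for some c_j ∈ ℂ. Then for u ∈ D: u ∈ S_{(m^{(1)},…,m^{(n)})}(X_1,…,X_n) if and only if u ∈ S_{(m^{(1)},…,m^{(n−1)})}(X_1,…,X_{n−1}) and u ∈ S_{m^{(n)}}(X_n). -/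

import Mathlib

open scoped ComplexInnerProductSpace

noncomputable section

/-- For a word `α = (i₁, …, i_k)`, `applyWord X α u = X_{i₁} (X_{i₂} ( ⋯ (X_{i_k} u)))`. -/
def applyWord {E : Type*} [NormedAddCommGroup E] [InnerProductSpace ℂ E] {ι : Type*}
    (X : ι → E →ₗ[ℂ] E) (α : List ι) (u : E) : E :=
  α.foldr (fun i v => X i v) u

/-- `u` is an `𝐦`-Gelfand–Shilov–Roumieu vector relative to the family `X`:
there are `C, A > 0` with `‖X_α u‖ ≤ C A^{|α|} 𝐦_α` for all words `α ∈ M(n)`,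
where `𝐦_α = ∏_j m^{(j)}_{|α|_j}`. -/
def memGSR {E : Type*} [NormedAddCommGroup E] [InnerProductSpace ℂ E]
    {ι : Type*} [Fintype ι] [DecidableEq ι]
    (m : ι → ℕ → ℝ) (X : ι → E →ₗ[ℂ] E) (u : E) : Prop :=
  ∃ C A : ℝ, 0 < C ∧ 0 < A ∧ ∀ α : List ι, α ≠ [] →
    ‖applyWord X α u‖ ≤ C * A ^ α.length * ∏ j, m j (α.count j)

/-- `u ∈ S_m(Y)` for a single operator `Y`: there are `C, A > 0` with
`‖Y^k u‖ ≤ C A^k m_k` for all `k ∈ ℕ`. -/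
def memGSRone {E : Type*} [NormedAddCommGroup E] [InnerProductSpace ℂ E]
    (m : ℕ → ℝ) (T : E →ₗ[ℂ] E) (u : E) : Prop :=
  ∃ C A : ℝ, 0 < C ∧ 0 < A ∧ ∀ k : ℕ, ‖(T ^ k) u‖ ≤ C * A ^ k * m k

namespace GSRaux

variable {E : Type*} [NormedAddCommGroup E] [InnerProductSpace ℂ E] {ι : Type*}
  (X : ι → E →ₗ[ℂ] E)

lemma applyWord_nil (u : E) : applyWord X [] u = u := rfl

lemma applyWord_cons (i : ι) (α : List ι) (u : E) :
    applyWord X (i :: α) u = X i (applyWord X α u) := rfl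

lemma applyWord_append (σ τ : List ι) (u : E) :
    applyWord X (σ ++ τ) u = applyWord X σ (applyWord X τ u) :=
  List.foldr_append

lemma applyWord_replicate (i : ι) (q : ℕ) (u : E) :
    applyWord X (List.replicate q i) u = (X i ^ q) u := by
  induction q with
  | zero => simp [applyWord]
  | succ q ih =>
      rw [List.replicate_succ, applyWord_cons, ih, pow_succ']
      rfl

lemma applyWord_sub_smul (α : List ι) (x y : E) (a : ℂ) :
    applyWord X α (x - a • y) = applyWord X α x - a • applyWord X α y := by
  induction α with
  | nil => rfl
  | cons i α ih => simp [applyWord_cons, ih, map_sub, map_smul]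

lemma applyWord_mem (D : Submodule ℂ E) (hXD : ∀ i, ∀ x ∈ D, X i x ∈ D)
    (α : List ι) (u : E) (hu : u ∈ D) : applyWord X α u ∈ D := by
  induction α with
  | nil => exact hu
  | cons i α ih => exact hXD i _ ih

lemma applyWord_map {κ : Type*} (f : κ → ι) (l : List κ) (u : E) :
    applyWord X (l.map f) u = applyWord (fun j => X (f j)) l u := by
  simp [applyWord, List.foldr_map]

lemma applyWord_inner_move (D : Submodule ℂ E) (hXD : ∀ i, ∀ x ∈ D, X i x ∈ D)
    (hherm : ∀ i, (∀ u ∈ D, ∀ v ∈ D, ⟪X i u, v⟫ = ⟪u, X i v⟫) ∨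
                  (∀ u ∈ D, ∀ v ∈ D, ⟪X i u, v⟫ = -⟪u, X i v⟫))
    (α : List ι) (y : E) (hy : y ∈ D) :
    ∀ z, z ∈ D → ‖⟪applyWord X α y, z⟫‖ = ‖⟪y, applyWord X α.reverse z⟫‖ := by
  induction α with
  | nil => intro z hz; simp [applyWord_nil]
  | cons i α ih =>
      intro z hz
      have hmem : applyWord X α y ∈ D := applyWord_mem X D hXD α y hy
      have step : ‖⟪X i (applyWord X α y), z⟫‖ = ‖⟪applyWord X α y, X i z⟫‖ := by
        rcases hherm i with h | h
        · rw [h _ hmem _ hz]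
        · rw [h _ hmem _ hz, norm_neg]
      rw [applyWord_cons, step, ih _ (hXD i z hz), List.reverse_cons,
        applyWord_append]
      rfl




section seq

variable (m : ℕ → ℝ)

lemma seq_ratio (hpos : ∀ p, 0 < m p)
    (hA1 : ∀ p : ℕ, m (p + 1) * m (p + 1) ≤ m p * m (p + 2)) :
    ∀ p q, p ≤ q → m (p + 1) * m q ≤ m p * m (q + 1) := by
  intro p q hpq
  induction q, hpq using Nat.le_induction with
  | base => ring_nf; exact le_rfl
  | succ q hpq ih =>
      have h2 : m (p + 1) * (m (q + 1) * m (q + 1)) ≤ m (p + 1) * (m q * m (q + 2)) :=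
        mul_le_mul_of_nonneg_left (hA1 q) (hpos (p + 1)).le
      have h3 : m (p + 1) * m q * m (q + 2) ≤ m p * m (q + 1) * m (q + 2) :=
        mul_le_mul_of_nonneg_right ih (hpos (q + 2)).le
      have h4 : m (p + 1) * m (q + 1) * m (q + 1) ≤ m p * m (q + 1 + 1) * m (q + 1) := by
        nlinarith [h2, h3]
      exact le_of_mul_le_mul_right h4 (hpos (q + 1))

lemma seq_mono (hpos : ∀ p, 0 < m p) (h0 : m 0 = 1) (h1 : m 1 = 1)
    (hA1 : ∀ p : ℕ, m (p + 1) * m (p + 1) ≤ m p * m (p + 2)) :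
    ∀ {p q}, p ≤ q → m p ≤ m q := by
  have step : ∀ p, m p ≤ m (p + 1) := by
    intro p
    have := seq_ratio m hpos hA1 0 p (Nat.zero_le p)
    rw [h0, h1, one_mul, one_mul] at this
    simpa using this
  intro p q h
  exact monotone_nat_of_le_succ step h

lemma seq_supmul (hpos : ∀ p, 0 < m p) (h0 : m 0 = 1) (h1 : m 1 = 1)
    (hA1 : ∀ p : ℕ, m (p + 1) * m (p + 1) ≤ m p * m (p + 2)) :
    ∀ p q, m p * m q ≤ m (p + q) := by
  intro p q
  induction q with
  | zero => simp [h0]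
  | succ q ih =>
      have hr : m (q + 1) * m (p + q) ≤ m q * m (p + q + 1) :=
        seq_ratio m hpos hA1 q (p + q) (Nat.le_add_left q p)
      have h3 : m p * m (q + 1) * m q ≤ m (p + (q + 1)) * m q := by
        have h5 : m p * m q * m (q + 1) ≤ m (p + q) * m (q + 1) :=
          mul_le_mul_of_nonneg_right ih (hpos (q + 1)).le
        have : p + (q + 1) = p + q + 1 := by omega
        rw [this]
        nlinarith [h5, hr]
      exact le_of_mul_le_mul_right h3 (hpos q)

lemma seq_prod_supmul (hpos : ∀ p, 0 < m p) (h0 : m 0 = 1) (h1 : m 1 = 1)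
    (hA1 : ∀ p : ℕ, m (p + 1) * m (p + 1) ≤ m p * m (p + 2))
    {κ : Type*} (s : Finset κ) (d : κ → ℕ) :
    (∏ j ∈ s, m (d j)) ≤ m (∑ j ∈ s, d j) := by
  classical
  induction s using Finset.induction_on with
  | empty => simp [h0]
  | insert x s hxs ih =>
      rw [Finset.prod_insert hxs, Finset.sum_insert hxs]
      calc m (d x) * ∏ j ∈ s, m (d j) ≤ m (d x) * m (∑ j ∈ s, d j) := by
            apply mul_le_mul_of_nonneg_left ih (hpos (d x)).le
        _ ≤ m (d x + ∑ j ∈ s, d j) := seq_supmul m hpos h0 h1 hA1 _ _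

lemma seq_factorial (q : ℕ → ℝ) (h0m : m 0 = 1) (h0q : q 0 = 1) (L : ℝ)
    (hA3 : ∀ p : ℕ, ((p + 1 : ℕ) : ℝ) * m p * q p ≤ L * m (p + 1) * q (p + 1))
    (hL : 0 ≤ L) (hqpos : ∀ p, 0 < q p) (hmpos : ∀ p, 0 < m p) :
    ∀ t : ℕ, (t.factorial : ℝ) ≤ L ^ t * m t * q t := by
  intro t
  induction t with
  | zero => simp [h0m, h0q]
  | succ t ih =>
      have h1 : ((t + 1).factorial : ℝ) = ((t + 1 : ℕ) : ℝ) * (t.factorial : ℝ) := by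
        push_cast [Nat.factorial_succ]; ring
      rw [h1]
      calc ((t + 1 : ℕ) : ℝ) * (t.factorial : ℝ)
          ≤ ((t + 1 : ℕ) : ℝ) * (L ^ t * m t * q t) := by
            apply mul_le_mul_of_nonneg_left ih
            positivity
        _ = L ^ t * (((t + 1 : ℕ) : ℝ) * m t * q t) := by ring
        _ ≤ L ^ t * (L * m (t + 1) * q (t + 1)) := by
            apply mul_le_mul_of_nonneg_left (hA3 t) (by positivity)
        _ = L ^ (t + 1) * m (t + 1) * q (t + 1) := by ring

end seq




variable {ι : Type*} [DecidableEq ι]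

/-- number of "inversions": pairs (position of `z`, later position of a non-`z`). -/
def invc (z : ι) : List ι → ℕ
  | [] => 0
  | i :: l => (if i = z then l.countP (fun x => decide (x ≠ z)) else 0) + invc z l

@[simp] lemma invc_nil (z : ι) : invc z ([] : List ι) = 0 := rfl

lemma invc_cons (z i : ι) (l : List ι) :
    invc z (i :: l) = (if i = z then l.countP (fun x => decide (x ≠ z)) else 0) + invc z l := rfl

lemma invc_le_sq (z : ι) (l : List ι) : invc z l ≤ l.length * l.length := by
  induction l with
  | nil => simp
  | cons i l ih =>
      have hc : l.countP (fun x => decide (x ≠ z)) ≤ l.length := List.countP_le_length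
      have : invc z (i :: l) ≤ l.length + invc z l := by
        rw [invc_cons]
        split <;> omega
      simp only [List.length_cons]
      nlinarith [ih, this]

lemma invc_append (z : ι) (σ τ : List ι) :
    invc z (σ ++ τ) = invc z σ + σ.count z * τ.countP (fun x => decide (x ≠ z)) + invc z τ := by
  induction σ with
  | nil => simp [invc]
  | cons i σ ih =>
      rw [List.cons_append, invc_cons, ih, invc_cons, List.count_cons,
        List.countP_append]
      by_cases h : i = z
      · simp only [h, if_true, if_pos rfl]
        have : (z == z) = true := by simp
        simp [this]
        ring
      · have hbe : (i == z) = false := by simp [h]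
        simp [h, hbe]

lemma invc_eq_zero (z : ι) (l : List ι) (h : invc z l = 0) :
    l = l.filter (fun x => decide (x ≠ z)) ++ List.replicate (l.count z) z := by
  induction l with
  | nil => simp
  | cons i l ih =>
      rw [invc_cons] at h
      have hl : invc z l = 0 := by omega
      by_cases hi : i = z
      · have hcnt : l.countP (fun x => decide (x ≠ z)) = 0 := by
          rw [if_pos hi] at h; omega
        have hall : ∀ a ∈ l, a = z := by
          intro a ha
          have := (List.countP_eq_zero).1 hcnt a ha
          simpa using this
        have hrep : l = List.replicate (l.count z) z := by
          have hlen : l.count z = l.length := by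
            rw [List.count_eq_length]
            intro b hb
            exact (hall b hb).symm
          rw [hlen]
          exact (List.eq_replicate_iff.2 ⟨rfl, hall⟩)
        have hfilt : (i :: l).filter (fun x => decide (x ≠ z)) = [] := by
          rw [List.filter_eq_nil_iff]
          intro a ha
          rcases List.mem_cons.1 ha with h' | h'
          · simp [h', hi]
          · simp [hall a h']
        rw [hfilt, List.nil_append, hi, List.count_cons_self]
        conv_lhs => rw [hrep]
        rw [List.replicate_succ]
      · have hfilt : (i :: l).filter (fun x => decide (x ≠ z)) =
            i :: l.filter (fun x => decide (x ≠ z)) := by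
          rw [List.filter_cons_of_pos]; simp [hi]
        have hcnt : (i :: l).count z = l.count z := by
          rw [List.count_cons_of_ne]
          exact fun hzi => hi (hzi ▸ rfl)
        rw [hfilt, hcnt, List.cons_append]
        exact congrArg (i :: ·) (ih hl)
      

lemma invc_pos (z : ι) (l : List ι) (h : 0 < invc z l) :
    ∃ σ i τ, i ≠ z ∧ l = σ ++ z :: i :: τ := by
  induction l with
  | nil => simp [invc] at h
  | cons x l ih =>
      by_cases hl : 0 < invc z l
      · obtain ⟨σ, i, τ, hi, hdec⟩ := ih hl
        exact ⟨x :: σ, i, τ, hi, by rw [hdec]; rfl⟩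
      · have hl0 : invc z l = 0 := by omega
        rw [invc_cons, hl0] at h
        have hx : x = z := by
          by_contra hx
          rw [if_neg hx] at h
          omega
        rw [if_pos hx] at h
        match l with
        | [] => simp at h
        | y :: l' =>
            by_cases hy : y = z
            · exfalso
              rw [invc_cons, if_pos hy] at hl0
              have hc0 : l'.countP (fun x => decide (x ≠ z)) = 0 := by omega
              have hdy : (decide (y ≠ z) : Bool) = false := by simp [hy]
              rw [List.countP_cons, hdy, hc0] at h
              simp at h
            · exact ⟨[], y, l', hy, by simp [hx]⟩




variable {n : ℕ}

/-- normal-form bound -/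
def NFB (C₀ A : ℝ) (mm : Fin n → ℕ → ℝ) (mq : ℕ → ℝ) (a : Fin n → ℕ) (b : ℕ) : ℝ :=
  C₀ * A ^ ((∑ j, a j) + b) * (∏ j, mm j (a j)) * mq b

/-- sum of normal-form bounds over all reductions with `t` total deletions. -/
def RedB (C₀ A : ℝ) (mm : Fin n → ℕ → ℝ) (mq : ℕ → ℝ) (a : Fin n → ℕ) (b t : ℕ) : ℝ :=
  if t ≤ b then
    ∑ d ∈ (Finset.Iic a).filter (fun d => ∑ j, d j = t), NFB C₀ A mm mq (a - d) (b - t)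
  else 0

/-- full bound at inversion level `I`. -/
def SB (C₀ A cB : ℝ) (mm : Fin n → ℕ → ℝ) (mq : ℕ → ℝ) (I : ℕ) (a : Fin n → ℕ) (b : ℕ) : ℝ :=
  ∑ t ∈ Finset.range (I + 1), (I.choose t : ℝ) * cB ^ t * RedB C₀ A mm mq a b t

section lemmas

variable {C₀ A cB : ℝ} {mm : Fin n → ℕ → ℝ} {mq : ℕ → ℝ}
  (hC : 0 < C₀) (hA : 0 < A) (hcB : 0 ≤ cB)
  (hmm : ∀ j p, 0 < mm j p) (hmq : ∀ p, 0 < mq p)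

include hC hA hmm hmq

lemma NFB_nonneg (a : Fin n → ℕ) (b : ℕ) : 0 ≤ NFB C₀ A mm mq a b := by
  unfold NFB
  have := (hmq b).le
  have : (0:ℝ) ≤ ∏ j, mm j (a j) := Finset.prod_nonneg fun j _ => (hmm j _).le
  positivity

lemma RedB_nonneg (a : Fin n → ℕ) (b t : ℕ) : 0 ≤ RedB C₀ A mm mq a b t := by
  unfold RedB
  split
  · exact Finset.sum_nonneg fun d _ => NFB_nonneg hC hA hmm hmq _ _
  · exact le_rfl

include hcB in
lemma SB_nonneg (I : ℕ) (a : Fin n → ℕ) (b : ℕ) : 0 ≤ SB C₀ A cB mm mq I a b :=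
  Finset.sum_nonneg fun t _ => by
    have := RedB_nonneg hC hA hmm hmq (mq := mq) (mm := mm) a b t
    positivity

/-- deletion-compatibility: a reduction of the reduced data is a deeper reduction
of the original data. -/
lemma RedB_le (a : Fin n → ℕ) (b t : ℕ) (j0 : Fin n) :
    RedB C₀ A mm mq a b t ≤ RedB C₀ A mm mq (a + Pi.single j0 1) (b + 1) (t + 1) := by
  classical
  unfold RedB
  by_cases ht : t ≤ b
  · rw [if_pos ht, if_pos (by omega)]
    set e : Fin n → ℕ := Pi.single j0 1 with he
    have hsum_e : ∑ j, e j = 1 := by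
      simp [he, Finset.sum_pi_single']
    have hinj : ∀ x ∈ (Finset.Iic a).filter (fun d => ∑ j, d j = t),
        ∀ y ∈ (Finset.Iic a).filter (fun d => ∑ j, d j = t), x + e = y + e → x = y := by
      intro x _ y _ hxy
      funext j
      have := congrFun hxy j
      simp only [Pi.add_apply] at this
      omega
    have himg : ((Finset.Iic a).filter (fun d => ∑ j, d j = t)).image (fun d => d + e) ⊆
        (Finset.Iic (a + e)).filter (fun d => ∑ j, d j = t + 1) := by
      intro d' hd'
      simp only [Finset.mem_image, Finset.mem_filter, Finset.mem_Iic] at hd' ⊢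
      obtain ⟨d, ⟨hdle, hdsum⟩, rfl⟩ := hd'
      constructor
      · intro j
        exact Nat.add_le_add_right (hdle j) (e j)
      · simp only [Pi.add_apply]
        rw [Finset.sum_add_distrib, hdsum, hsum_e]
    calc ∑ d ∈ (Finset.Iic a).filter (fun d => ∑ j, d j = t), NFB C₀ A mm mq (a - d) (b - t)
        = ∑ d' ∈ ((Finset.Iic a).filter (fun d => ∑ j, d j = t)).image (fun d => d + e),
            NFB C₀ A mm mq ((a + e) - d') ((b + 1) - (t + 1)) := by
          rw [Finset.sum_image hinj]
          apply Finset.sum_congr rfl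
          intro d _
          congr 1
          · funext j
            simp only [Pi.sub_apply, Pi.add_apply]
            omega
          · omega
      _ ≤ ∑ d' ∈ (Finset.Iic (a + e)).filter (fun d => ∑ j, d j = t + 1),
            NFB C₀ A mm mq ((a + e) - d') ((b + 1) - (t + 1)) := by
          apply Finset.sum_le_sum_of_subset_of_nonneg himg
          intro d' _ _
          exact NFB_nonneg hC hA hmm hmq _ _
  · rw [if_neg ht]
    split
    · exact Finset.sum_nonneg fun d _ => NFB_nonneg hC hA hmm hmq _ _
    · exact le_rfl

omit hC hA hmm hmq in
lemma RedB_zero (a : Fin n → ℕ) (b : ℕ) :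
    RedB C₀ A mm mq a b 0 = NFB C₀ A mm mq a b := by
  classical
  unfold RedB
  rw [if_pos (Nat.zero_le b)]
  have hset : (Finset.Iic a).filter (fun d => ∑ j, d j = 0) = {0} := by
    ext d
    simp only [Finset.mem_filter, Finset.mem_Iic, Finset.mem_singleton]
    constructor
    · rintro ⟨hle, hsum⟩
      funext j
      have := Finset.sum_eq_zero_iff.1 hsum j (Finset.mem_univ j)
      exact this
    · rintro rfl
      exact ⟨fun j => Nat.zero_le _, by simp⟩
  rw [hset, Finset.sum_singleton]
  have h1 : a - 0 = a := by funext j; simp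
  rw [h1, Nat.sub_zero]


include hcB in
lemma NFB_le_SB (I : ℕ) (a : Fin n → ℕ) (b : ℕ) :
    NFB C₀ A mm mq a b ≤ SB C₀ A cB mm mq I a b := by
  have h0 : NFB C₀ A mm mq a b =
      (I.choose 0 : ℝ) * cB ^ 0 * RedB C₀ A mm mq a b 0 := by
    rw [RedB_zero]
    simp
  rw [h0]
  apply Finset.single_le_sum (f := fun t => (I.choose t : ℝ) * cB ^ t * RedB C₀ A mm mq a b t)
  · intro t _
    have := RedB_nonneg hC hA hmm hmq (mq := mq) (mm := mm) a b t
    positivity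
  · simp

include hcB in
lemma SB_step (I' I'' : ℕ) (hI'' : I'' ≤ I') (a : Fin n → ℕ) (b : ℕ) (j0 : Fin n) :
    SB C₀ A cB mm mq I' (a + Pi.single j0 1) (b + 1) + cB * SB C₀ A cB mm mq I'' a b ≤
      SB C₀ A cB mm mq (I' + 1) (a + Pi.single j0 1) (b + 1) := by
  classical
  set a' := a + Pi.single j0 1 with ha'
  set R : ℕ → ℝ := fun t => RedB C₀ A mm mq a' (b + 1) t with hR
  set r : ℕ → ℝ := fun t => RedB C₀ A mm mq a b t with hr
  have hRnn : ∀ t, 0 ≤ R t := fun t => RedB_nonneg hC hA hmm hmq _ _ _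
  have hrnn : ∀ t, 0 ≤ r t := fun t => RedB_nonneg hC hA hmm hmq _ _ _
  have hstep : ∀ t, r t ≤ R (t + 1) := fun t => RedB_le hC hA hmm hmq a b t j0
  have h2 : cB * SB C₀ A cB mm mq I'' a b ≤
      ∑ t ∈ Finset.range (I' + 1), (I'.choose t : ℝ) * cB ^ (t + 1) * R (t + 1) := by
    rw [SB, Finset.mul_sum]
    calc ∑ t ∈ Finset.range (I'' + 1), cB * ((I''.choose t : ℝ) * cB ^ t * r t)
        ≤ ∑ t ∈ Finset.range (I'' + 1), (I'.choose t : ℝ) * cB ^ (t + 1) * R (t + 1) := by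
          apply Finset.sum_le_sum
          intro t _
          have hch : (I''.choose t : ℝ) ≤ (I'.choose t : ℝ) := by
            exact_mod_cast Nat.choose_le_choose t hI''
          have h1 : cB * ((I''.choose t : ℝ) * cB ^ t * r t)
              = (I''.choose t : ℝ) * cB ^ (t + 1) * r t := by ring
          rw [h1]
          apply mul_le_mul
          · apply mul_le_mul_of_nonneg_right hch (by positivity)
          · exact hstep t
          · exact hrnn t
          · positivity
      _ ≤ ∑ t ∈ Finset.range (I' + 1), (I'.choose t : ℝ) * cB ^ (t + 1) * R (t + 1) := by
          apply Finset.sum_le_sum_of_subset_of_nonneg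
          · exact Finset.range_subset_range.2 (by omega)
          · intro t _ _
            have := hRnn (t + 1)
            positivity
  have h3 : ∑ t ∈ Finset.range (I' + 1), (I'.choose t : ℝ) * cB ^ (t + 1) * R (t + 1)
      = ∑ t ∈ Finset.range (I' + 2),
          (if t = 0 then 0 else ((I'.choose (t - 1) : ℝ) * cB ^ t * R t)) := by
    rw [Finset.sum_range_succ'
      (fun t => if t = 0 then (0 : ℝ) else ((I'.choose (t - 1) : ℝ) * cB ^ t * R t)) (I' + 1)]
    simp
  have h4 : SB C₀ A cB mm mq I' a' (b + 1)
      = ∑ t ∈ Finset.range (I' + 2), (I'.choose t : ℝ) * cB ^ t * R t := by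
    rw [SB, Finset.sum_range_succ (fun t => (I'.choose t : ℝ) * cB ^ t * R t) (I' + 1)]
    rw [Nat.choose_eq_zero_of_lt (by omega)]
    simp
    rfl
  calc SB C₀ A cB mm mq I' a' (b + 1) + cB * SB C₀ A cB mm mq I'' a b
      ≤ (∑ t ∈ Finset.range (I' + 2), (I'.choose t : ℝ) * cB ^ t * R t)
        + ∑ t ∈ Finset.range (I' + 2),
            (if t = 0 then 0 else ((I'.choose (t - 1) : ℝ) * cB ^ t * R t)) := by
        rw [← h4, ← h3]
        exact add_le_add_right h2 _
    _ = ∑ t ∈ Finset.range (I' + 2),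
          (((I'.choose t : ℝ) * cB ^ t * R t)
            + (if t = 0 then 0 else ((I'.choose (t - 1) : ℝ) * cB ^ t * R t))) := by
        rw [Finset.sum_add_distrib]
    _ = ∑ t ∈ Finset.range (I' + 2), ((I' + 1).choose t : ℝ) * cB ^ t * R t := by
        apply Finset.sum_congr rfl
        intro t _
        match t with
        | 0 => simp
        | s + 1 =>
            have : (I' + 1).choose (s + 1) = I'.choose s + I'.choose (s + 1) :=
              Nat.choose_succ_succ I' s
            rw [if_neg (by omega)]
            push_cast [this]
            ring_nf
    _ = SB C₀ A cB mm mq (I' + 1) a' (b + 1) := rfl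

lemma SB_absorb (hA1 : 1 ≤ A) (hcB1 : 1 ≤ cB) (L : ℝ) (hL : 1 ≤ L)
    (h0mm : ∀ j, mm j 0 = 1) (h1mm : ∀ j, mm j 1 = 1)
    (hA1mm : ∀ j p, mm j (p + 1) * mm j (p + 1) ≤ mm j p * mm j (p + 2))
    (h0q : mq 0 = 1) (h1q : mq 1 = 1)
    (hA1q : ∀ p, mq (p + 1) * mq (p + 1) ≤ mq p * mq (p + 2))
    (hfact : ∀ (j : Fin n) (t : ℕ), (t.factorial : ℝ) ≤ L ^ t * mm j t * mq t)
    (I k : ℕ) (hIk : I ≤ k * k) (a : Fin n → ℕ) (b : ℕ) (hk : (∑ j, a j) + b = k) :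
    SB C₀ A cB mm mq I a b ≤
      C₀ * (8 * A * cB * L * Real.exp (2 * n)) ^ k * (∏ j, mm j (a j)) * mq b := by
  classical
  have hcB0 : (0:ℝ) ≤ cB := by linarith
  have hPm : (0:ℝ) < ∏ j, mm j (a j) := Finset.prod_pos fun j _ => hmm j _
  have hexp : (0:ℝ) < Real.exp (2 * n) := Real.exp_pos _
  -- bound for a single (t, d) term
  have hterm : ∀ t, t ≤ b → ∀ d : Fin n → ℕ, d ≤ a → (∑ j, d j) = t →
      (I.choose t : ℝ) * NFB C₀ A mm mq (a - d) (b - t) ≤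
        C₀ * A ^ k * (Real.exp (2 * n)) ^ k * L ^ t * ((∏ j, mm j (a j)) * mq b) := by
    intro t htb d hda hdt
    have hApow : A ^ ((∑ j, (a - d) j) + (b - t)) ≤ A ^ k := by
      apply pow_le_pow_right₀ hA1
      have h1 : (∑ j, (a - d) j) ≤ ∑ j, a j :=
        Finset.sum_le_sum fun j _ => Nat.sub_le _ _
      omega
    -- choose bound
    have hchoose : (I.choose t : ℝ) ≤ (Real.exp (2 * n)) ^ k * ∏ j, ((d j).factorial : ℝ) := by
      have hnat1 : I.choose t * t.factorial ≤ k ^ (2 * t) := by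
        calc I.choose t * t.factorial = I.descFactorial t := by
              rw [Nat.descFactorial_eq_factorial_mul_choose]; ring
          _ ≤ I ^ t := Nat.descFactorial_le_pow I t
          _ ≤ (k * k) ^ t := Nat.pow_le_pow_left hIk t
          _ = k ^ (2 * t) := by rw [mul_pow, ← pow_add, two_mul]
      have hperj : ∀ j : Fin n, ((k : ℝ)) ^ (d j) ≤ Real.exp k * ((d j).factorial : ℝ) := by
        intro j
        have hsumle := Real.sum_le_exp_of_nonneg (x := (k:ℝ)) (by positivity) (d j + 1)
        have hsingle : (k:ℝ) ^ (d j) / ((d j).factorial : ℝ) ≤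
            ∑ i ∈ Finset.range (d j + 1), (k:ℝ) ^ i / (i.factorial : ℝ) :=
          Finset.single_le_sum (f := fun i => (k:ℝ) ^ i / (i.factorial : ℝ))
            (fun i _ => by positivity) (by simp : d j ∈ Finset.range (d j + 1))
        have h2 : (0:ℝ) < ((d j).factorial : ℝ) := by
          exact_mod_cast Nat.factorial_pos _
        have h1 := hsingle.trans hsumle
        calc ((k : ℝ)) ^ (d j)
            = ((k : ℝ)) ^ (d j) / ((d j).factorial : ℝ) * ((d j).factorial : ℝ) := by
              field_simp
          _ ≤ Real.exp k * ((d j).factorial : ℝ) := mul_le_mul_of_nonneg_right h1 h2.le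
      have hdfact_le : ((∏ j, ((d j).factorial : ℝ))) ≤ (t.factorial : ℝ) := by
        have hnat : (∏ j, (d j).factorial) ≤ t.factorial := by
          apply Nat.le_of_dvd (Nat.factorial_pos t)
          rw [← hdt]
          exact Nat.prod_factorial_dvd_factorial_sum _ _
        exact_mod_cast hnat
      have hprodpow : ∏ j : Fin n, ((k:ℝ)) ^ (d j) = ((k:ℝ)) ^ t := by
        rw [Finset.prod_pow_eq_pow_sum, hdt]
      have hprod : ((k : ℝ)) ^ (2 * t) ≤
          (Real.exp (k:ℝ)) ^ (2 * n) * (∏ j, ((d j).factorial : ℝ)) * (t.factorial : ℝ) := by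
        calc ((k : ℝ)) ^ (2 * t) = ∏ j : Fin n, (((k : ℝ)) ^ (d j)) ^ 2 := by
              rw [Finset.prod_pow, hprodpow, ← pow_mul, mul_comm t 2]
          _ ≤ ∏ j : Fin n, (Real.exp (k:ℝ) * ((d j).factorial : ℝ)) ^ 2 := by
              apply Finset.prod_le_prod
              · intro j _; positivity
              · intro j _
                apply pow_le_pow_left₀ (by positivity) (hperj j)
          _ = (Real.exp (k:ℝ)) ^ (2 * n) *
                ((∏ j, ((d j).factorial : ℝ)) * ∏ j, ((d j).factorial : ℝ)) := by
              simp only [mul_pow]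
              rw [Finset.prod_mul_distrib, Finset.prod_const, Finset.card_univ,
                Fintype.card_fin, ← pow_mul]
              congr 1
              rw [← Finset.prod_mul_distrib]
              exact Finset.prod_congr rfl fun j _ => pow_two _
          _ ≤ (Real.exp (k:ℝ)) ^ (2 * n) * ((∏ j, ((d j).factorial : ℝ)) * (t.factorial : ℝ)) := by
              apply mul_le_mul_of_nonneg_left _ (by positivity)
              apply mul_le_mul_of_nonneg_left hdfact_le
              exact Finset.prod_nonneg fun j _ => by positivity
          _ = (Real.exp (k:ℝ)) ^ (2 * n) * (∏ j, ((d j).factorial : ℝ)) * (t.factorial : ℝ) := by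
              ring
      have hexpeq : (Real.exp (k:ℝ)) ^ (2 * n) = (Real.exp (2 * (n:ℝ))) ^ k := by
        rw [← Real.exp_nat_mul, ← Real.exp_nat_mul]
        congr 1
        push_cast
        ring
      have htf : (0:ℝ) < (t.factorial : ℝ) := by exact_mod_cast Nat.factorial_pos t
      have hmain : (I.choose t : ℝ) * (t.factorial : ℝ) ≤
          ((Real.exp (2 * (n:ℝ))) ^ k * ∏ j, ((d j).factorial : ℝ)) * (t.factorial : ℝ) := by
        calc (I.choose t : ℝ) * (t.factorial : ℝ) ≤ ((k:ℝ)) ^ (2 * t) := by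
              exact_mod_cast hnat1
          _ ≤ (Real.exp (k:ℝ)) ^ (2 * n) * (∏ j, ((d j).factorial : ℝ)) * (t.factorial : ℝ) :=
              hprod
          _ = ((Real.exp (2 * (n:ℝ))) ^ k * ∏ j, ((d j).factorial : ℝ)) * (t.factorial : ℝ) := by
              rw [hexpeq]
      exact le_of_mul_le_mul_right hmain htf
    -- factorial absorption
    have habsorb : (∏ j, ((d j).factorial : ℝ)) * ((∏ j, mm j ((a - d) j)) * mq (b - t)) ≤
        L ^ t * ((∏ j, mm j (a j)) * mq b) := by
      have hperj : ∀ j : Fin n, ((d j).factorial : ℝ) * mm j ((a - d) j) ≤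
          L ^ (d j) * mm j (a j) * mq (d j) := by
        intro j
        have h1 : ((d j).factorial : ℝ) * mm j ((a - d) j) ≤
            (L ^ (d j) * mm j (d j) * mq (d j)) * mm j ((a - d) j) :=
          mul_le_mul_of_nonneg_right (hfact j (d j)) (hmm j _).le
        have h2 : mm j ((a - d) j) * mm j (d j) ≤ mm j (a j) := by
          have hsup := seq_supmul (mm j) (hmm j) (h0mm j) (h1mm j) (hA1mm j)
            ((a - d) j) (d j)
          have : (a - d) j + d j = a j := by
            have hdj : d j ≤ a j := hda j
            show a j - d j + d j = a j
            omega
          rw [this] at hsup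
          exact hsup
        calc ((d j).factorial : ℝ) * mm j ((a - d) j)
            ≤ (L ^ (d j) * mm j (d j) * mq (d j)) * mm j ((a - d) j) := h1
          _ = (L ^ (d j) * mq (d j)) * (mm j ((a - d) j) * mm j (d j)) := by ring
          _ ≤ (L ^ (d j) * mq (d j)) * mm j (a j) := by
              apply mul_le_mul_of_nonneg_left h2
              have := (hmq (d j)).le
              positivity
          _ = L ^ (d j) * mm j (a j) * mq (d j) := by ring
      have hprodj : (∏ j, ((d j).factorial : ℝ)) * (∏ j, mm j ((a - d) j)) ≤
          L ^ t * (∏ j, mm j (a j)) * ∏ j, mq (d j) := by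
        calc (∏ j, ((d j).factorial : ℝ)) * (∏ j, mm j ((a - d) j))
            = ∏ j, (((d j).factorial : ℝ) * mm j ((a - d) j)) := by
              rw [Finset.prod_mul_distrib]
          _ ≤ ∏ j, (L ^ (d j) * mm j (a j) * mq (d j)) := by
              apply Finset.prod_le_prod
              · intro j _
                have : (0:ℝ) < mm j ((a - d) j) := hmm j _
                positivity
              · intro j _
                exact hperj j
          _ = (∏ j, L ^ (d j)) * (∏ j, mm j (a j)) * ∏ j, mq (d j) := by
              rw [← Finset.prod_mul_distrib, ← Finset.prod_mul_distrib]
          _ = L ^ t * (∏ j, mm j (a j)) * ∏ j, mq (d j) := by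
              rw [Finset.prod_pow_eq_pow_sum, hdt]
      have hq1 : (∏ j, mq (d j)) ≤ mq t := by
        have := seq_prod_supmul mq hmq h0q h1q hA1q Finset.univ d
        rwa [hdt] at this
      have hq2 : mq t * mq (b - t) ≤ mq b := by
        have hsup := seq_supmul mq hmq h0q h1q hA1q t (b - t)
        have : t + (b - t) = b := by omega
        rwa [this] at hsup
      calc (∏ j, ((d j).factorial : ℝ)) * ((∏ j, mm j ((a - d) j)) * mq (b - t))
          = ((∏ j, ((d j).factorial : ℝ)) * (∏ j, mm j ((a - d) j))) * mq (b - t) := by ring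
        _ ≤ (L ^ t * (∏ j, mm j (a j)) * ∏ j, mq (d j)) * mq (b - t) := by
            apply mul_le_mul_of_nonneg_right hprodj (hmq _).le
        _ = (L ^ t * (∏ j, mm j (a j))) * ((∏ j, mq (d j)) * mq (b - t)) := by ring
        _ ≤ (L ^ t * (∏ j, mm j (a j))) * (mq t * mq (b - t)) := by
            apply mul_le_mul_of_nonneg_left
              (mul_le_mul_of_nonneg_right hq1 (hmq _).le)
            positivity
        _ ≤ (L ^ t * (∏ j, mm j (a j))) * mq b := by
            apply mul_le_mul_of_nonneg_left hq2
            positivity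
        _ = L ^ t * ((∏ j, mm j (a j)) * mq b) := by ring
    -- combine
    unfold NFB
    have hmm_red_nonneg : (0:ℝ) ≤ ∏ j, mm j ((a - d) j) :=
      Finset.prod_nonneg fun j _ => (hmm j _).le
    calc (I.choose t : ℝ) *
          (C₀ * A ^ ((∑ j, (a - d) j) + (b - t)) * (∏ j, mm j ((a - d) j)) * mq (b - t))
        ≤ (I.choose t : ℝ) *
          (C₀ * A ^ k * (∏ j, mm j ((a - d) j)) * mq (b - t)) := by
          apply mul_le_mul_of_nonneg_left _ (by positivity)
          have := (hmq (b - t)).le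
          apply mul_le_mul_of_nonneg_right
          apply mul_le_mul_of_nonneg_right
          · exact mul_le_mul_of_nonneg_left hApow hC.le
          · exact hmm_red_nonneg
          · exact this
      _ ≤ ((Real.exp (2 * (n:ℝ))) ^ k * ∏ j, ((d j).factorial : ℝ)) *
          (C₀ * A ^ k * (∏ j, mm j ((a - d) j)) * mq (b - t)) := by
          apply mul_le_mul_of_nonneg_right hchoose
          have h1 : (0:ℝ) ≤ mq (b - t) := (hmq _).le
          positivity
      _ = (C₀ * A ^ k * (Real.exp (2 * (n:ℝ))) ^ k) *
          ((∏ j, ((d j).factorial : ℝ)) * ((∏ j, mm j ((a - d) j)) * mq (b - t))) := by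
          ring
      _ ≤ (C₀ * A ^ k * (Real.exp (2 * (n:ℝ))) ^ k) *
          (L ^ t * ((∏ j, mm j (a j)) * mq b)) := by
          apply mul_le_mul_of_nonneg_left habsorb
          positivity
      _ = C₀ * A ^ k * (Real.exp (2 * (n:ℝ))) ^ k * L ^ t * ((∏ j, mm j (a j)) * mq b) := by
          ring
  -- bound each RedB
  have hRed : ∀ t, (I.choose t : ℝ) * cB ^ t * RedB C₀ A mm mq a b t ≤
      (2:ℝ) ^ k * (C₀ * A ^ k * (Real.exp (2 * n)) ^ k * (L * cB) ^ k *
        ((∏ j, mm j (a j)) * mq b)) := by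
    intro t
    have hTnn : (0:ℝ) ≤ C₀ * A ^ k * (Real.exp (2 * n)) ^ k * (L * cB) ^ k *
        ((∏ j, mm j (a j)) * mq b) := by
      have := (hmq b).le
      positivity
    unfold RedB
    by_cases htb : t ≤ b
    · rw [if_pos htb]
      have hcard : (((Finset.Iic a).filter (fun d => ∑ j, d j = t)).card : ℝ) ≤ (2:ℝ) ^ k := by
        have h1 : ((Finset.Iic a).filter (fun d => ∑ j, d j = t)).card ≤ (Finset.Iic a).card :=
          Finset.card_filter_le _ _
        have h2 : (Finset.Iic a).card = ∏ j, (a j + 1) := by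
          rw [Pi.card_Iic]
          simp [Nat.card_Iic]
        have h3 : (∏ j, (a j + 1)) ≤ 2 ^ k := by
          calc (∏ j, (a j + 1)) ≤ ∏ j, 2 ^ (a j) := by
                apply Finset.prod_le_prod'
                intro j _
                exact Nat.lt_two_pow_self
            _ = 2 ^ (∑ j, a j) := by rw [Finset.prod_pow_eq_pow_sum]
            _ ≤ 2 ^ k := Nat.pow_le_pow_right (by norm_num)
                (hk ▸ Nat.le_add_right _ b)
        have h5 : ((Finset.Iic a).filter (fun d => ∑ j, d j = t)).card ≤ 2 ^ k :=
          le_trans h1 (le_trans (le_of_eq h2) h3)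
        exact_mod_cast le_trans (Nat.cast_le.2 h5) (by norm_num)
      have hsum : ∑ d ∈ (Finset.Iic a).filter (fun d => ∑ j, d j = t),
          (I.choose t : ℝ) * cB ^ t * NFB C₀ A mm mq (a - d) (b - t) ≤
          ∑ d ∈ (Finset.Iic a).filter (fun d => ∑ j, d j = t),
            (C₀ * A ^ k * (Real.exp (2 * n)) ^ k * (L * cB) ^ k * ((∏ j, mm j (a j)) * mq b)) := by
        apply Finset.sum_le_sum
        intro d hd
        simp only [Finset.mem_filter, Finset.mem_Iic] at hd
        have h1 := hterm t htb d hd.1 hd.2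
        have hLt : L ^ t ≤ L ^ k := pow_le_pow_right₀ hL (by omega)
        have hct : cB ^ t ≤ cB ^ k := pow_le_pow_right₀ hcB1 (by omega)
        calc (I.choose t : ℝ) * cB ^ t * NFB C₀ A mm mq (a - d) (b - t)
            = cB ^ t * ((I.choose t : ℝ) * NFB C₀ A mm mq (a - d) (b - t)) := by ring
          _ ≤ cB ^ t * (C₀ * A ^ k * (Real.exp (2 * n)) ^ k * L ^ t *
                ((∏ j, mm j (a j)) * mq b)) := by
              apply mul_le_mul_of_nonneg_left h1 (by positivity)
          _ = (C₀ * A ^ k * (Real.exp (2 * n)) ^ k * ((∏ j, mm j (a j)) * mq b)) *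
                (L ^ t * cB ^ t) := by ring
          _ ≤ (C₀ * A ^ k * (Real.exp (2 * n)) ^ k * ((∏ j, mm j (a j)) * mq b)) *
                (L ^ k * cB ^ k) := by
              apply mul_le_mul_of_nonneg_left _ (by
                have := (hmq b).le
                positivity)
              apply mul_le_mul hLt hct (by positivity) (by positivity)
          _ = C₀ * A ^ k * (Real.exp (2 * n)) ^ k * (L * cB) ^ k *
                ((∏ j, mm j (a j)) * mq b) := by
              rw [mul_pow]
              ring
      calc (I.choose t : ℝ) * cB ^ t *
            ∑ d ∈ (Finset.Iic a).filter (fun d => ∑ j, d j = t), NFB C₀ A mm mq (a - d) (b - t)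
          = ∑ d ∈ (Finset.Iic a).filter (fun d => ∑ j, d j = t),
              (I.choose t : ℝ) * cB ^ t * NFB C₀ A mm mq (a - d) (b - t) := by
            rw [Finset.mul_sum]
        _ ≤ ∑ d ∈ (Finset.Iic a).filter (fun d => ∑ j, d j = t),
              (C₀ * A ^ k * (Real.exp (2 * n)) ^ k * (L * cB) ^ k *
                ((∏ j, mm j (a j)) * mq b)) := hsum
        _ = (((Finset.Iic a).filter (fun d => ∑ j, d j = t)).card : ℝ) *
              (C₀ * A ^ k * (Real.exp (2 * n)) ^ k * (L * cB) ^ k *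
                ((∏ j, mm j (a j)) * mq b)) := by
            rw [Finset.sum_const, nsmul_eq_mul]
        _ ≤ (2:ℝ) ^ k * (C₀ * A ^ k * (Real.exp (2 * n)) ^ k * (L * cB) ^ k *
              ((∏ j, mm j (a j)) * mq b)) := by
            exact mul_le_mul_of_nonneg_right hcard hTnn
    · rw [if_neg htb, mul_zero]
      positivity
  -- sum over t
  have hfinal : SB C₀ A cB mm mq I a b ≤
      ((I:ℝ) + 1) * ((2:ℝ) ^ k * (C₀ * A ^ k * (Real.exp (2 * n)) ^ k * (L * cB) ^ k *
        ((∏ j, mm j (a j)) * mq b))) := by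
    unfold SB
    calc ∑ t ∈ Finset.range (I + 1), (I.choose t : ℝ) * cB ^ t * RedB C₀ A mm mq a b t
        ≤ ∑ t ∈ Finset.range (I + 1), ((2:ℝ) ^ k * (C₀ * A ^ k * (Real.exp (2 * n)) ^ k *
            (L * cB) ^ k * ((∏ j, mm j (a j)) * mq b))) :=
          Finset.sum_le_sum fun t _ => hRed t
      _ = ((I:ℝ) + 1) * ((2:ℝ) ^ k * (C₀ * A ^ k * (Real.exp (2 * n)) ^ k * (L * cB) ^ k *
            ((∏ j, mm j (a j)) * mq b))) := by
          rw [Finset.sum_const, Finset.card_range, nsmul_eq_mul]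
          push_cast
          ring
  have hI4 : ((I:ℝ) + 1) ≤ (4:ℝ) ^ k := by
    have h1 : I + 1 ≤ 4 ^ k := by
      have h2 : k + 1 ≤ 2 ^ k := Nat.lt_two_pow_self
      have h3 : (k + 1) * (k + 1) ≤ 2 ^ k * 2 ^ k := Nat.mul_le_mul h2 h2
      have h4 : 2 ^ k * 2 ^ k = 4 ^ k := by
        rw [← pow_add, show (4:ℕ) = 2 ^ 2 from rfl, ← pow_mul]
        congr 1
        omega
      nlinarith [hIk]
    calc ((I:ℝ) + 1) = ((I + 1 : ℕ) : ℝ) := by push_cast; ring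
      _ ≤ ((4 ^ k : ℕ) : ℝ) := Nat.cast_le.2 h1
      _ = (4:ℝ) ^ k := by push_cast; ring
  calc SB C₀ A cB mm mq I a b
      ≤ ((I:ℝ) + 1) * ((2:ℝ) ^ k * (C₀ * A ^ k * (Real.exp (2 * n)) ^ k * (L * cB) ^ k *
          ((∏ j, mm j (a j)) * mq b))) := hfinal
    _ ≤ (4:ℝ) ^ k * ((2:ℝ) ^ k * (C₀ * A ^ k * (Real.exp (2 * n)) ^ k * (L * cB) ^ k *
          ((∏ j, mm j (a j)) * mq b))) := by
        apply mul_le_mul_of_nonneg_right hI4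
        have := (hmq b).le
        positivity
    _ = C₀ * (8 * A * cB * L * Real.exp (2 * n)) ^ k * (∏ j, mm j (a j)) * mq b := by
        rw [show (8 : ℝ) * A * cB * L * Real.exp (2 * n) =
          4 * (2 * (A * (Real.exp (2 * n) * (L * cB)))) by ring]
        rw [mul_pow, mul_pow, mul_pow, mul_pow, mul_pow]
        ring

end lemmas



lemma count_univ_sum {ι : Type*} [DecidableEq ι] [Fintype ι] (l : List ι) :
    ∑ i, l.count i = l.length := by
  induction l with
  | nil => simp
  | cons x l ih =>
      simp only [List.count_cons, List.length_cons]
      rw [Finset.sum_add_distrib, ih]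
      congr 1
      simp

end GSRaux

set_option maxHeartbeats 2000000 in
open GSRaux in
/-- Proposition 2.4.  Here the family consists of `n+1` operators
`X_0, …, X_n` (the paper's `X_1, …, X_n` with `X_n` corresponding to `X (Fin.last n)`),
Hermitian or skew-Hermitian on a common invariant domain `D`; the sequences satisfy
(A0)–(A2), each pair `(m^{(j)}, m^{(n)})` satisfies (A3), and `[X_j, X_n] = c_j·I` on `D`.
Then `u ∈ D` belongs to `S_𝐦(𝐗)` iff it belongs to `S_{𝐦'}(𝐗') ∩ S_{m^{(n)}}(X_n)`. -/
theorem gsr_split_last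
    {E : Type*} [NormedAddCommGroup E] [InnerProductSpace ℂ E] [CompleteSpace E]
    (n : ℕ) (hn : 1 ≤ n) (D : Submodule ℂ E)
    (X : Fin (n + 1) → E →ₗ[ℂ] E)
    (hXD : ∀ i, ∀ x ∈ D, X i x ∈ D)
    (hherm : ∀ i, (∀ u ∈ D, ∀ v ∈ D, ⟪X i u, v⟫ = ⟪u, X i v⟫) ∨
                  (∀ u ∈ D, ∀ v ∈ D, ⟪X i u, v⟫ = -⟪u, X i v⟫))
    (m : Fin (n + 1) → ℕ → ℝ) (hmpos : ∀ i p, 0 < m i p)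
    (hA0 : ∀ i, m i 0 = 1 ∧ m i 1 = 1)
    (hA1 : ∀ i, ∀ p : ℕ, 1 ≤ p → (m i p) ^ 2 ≤ m i (p - 1) * m i (p + 1))
    (hA2 : ∀ i, ∃ H : ℝ, 0 < H ∧ ∀ p q, m i (p + q) ≤ H ^ (p + q) * m i p * m i q)
    (c : Fin n → ℂ)
    (hcomm : ∀ j : Fin n, ∀ x ∈ D,
      X j.castSucc (X (Fin.last n) x) - X (Fin.last n) (X j.castSucc x) = c j • x)
    (hA3 : ∀ j : Fin n, ∃ L : ℝ, 1 ≤ L ∧ ∀ p : ℕ, 1 ≤ p →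
      (p : ℝ) * m j.castSucc (p - 1) * m (Fin.last n) (p - 1) ≤
        L * m j.castSucc p * m (Fin.last n) p)
    (u : E) (hu : u ∈ D) :
    memGSR m X u ↔
      (memGSR (fun j : Fin n => m j.castSucc) (fun j => X j.castSucc) u ∧
        memGSRone (m (Fin.last n)) (X (Fin.last n)) u) := by

  classical
  set z := Fin.last n with hz
  constructor
  · rintro ⟨C, A, hC, hA, hbound⟩
    constructor
    · refine ⟨C, A, hC, hA, ?_⟩
      intro α hα
      have hmap : applyWord (fun j : Fin n => X j.castSucc) α u
          = applyWord X (α.map Fin.castSucc) u :=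
        (applyWord_map X Fin.castSucc α u).symm
      have hne : α.map Fin.castSucc ≠ [] := by simpa using hα
      have hb := hbound (α.map Fin.castSucc) hne
      rw [List.length_map] at hb
      rw [hmap]
      refine le_trans hb (le_of_eq ?_)
      congr 1
      rw [Fin.prod_univ_castSucc]
      have hlast : (α.map Fin.castSucc).count (Fin.last n) = 0 := by
        rw [List.count_eq_zero]
        intro hmem
        obtain ⟨j, _, hj⟩ := List.mem_map.1 hmem
        exact (Fin.castSucc_lt_last j).ne hj
      rw [hlast, (hA0 (Fin.last n)).1, mul_one]
      apply Finset.prod_congr rfl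
      intro j _
      rw [List.count_map_of_injective _ _ (Fin.castSucc_injective n)]
    · refine ⟨C + ‖u‖, A, by positivity, hA, ?_⟩
      intro k
      match k with
      | 0 =>
          simp only [pow_zero, Module.End.one_apply, (hA0 z).1]
          nlinarith [hC, norm_nonneg u]
      | k + 1 =>
          have hne : List.replicate (k + 1) z ≠ [] := by simp
          have hb := hbound (List.replicate (k + 1) z) hne
          rw [applyWord_replicate, List.length_replicate] at hb
          have hprod : (∏ i, m i ((List.replicate (k + 1) z).count i)) = m z (k + 1) := by
            rw [Fin.prod_univ_castSucc]
            have h1 : ∀ j : Fin n, (List.replicate (k + 1) z).count j.castSucc = 0 := by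
              intro j
              rw [List.count_eq_zero]
              intro hmem
              have := List.eq_of_mem_replicate hmem
              exact (Fin.castSucc_lt_last j).ne (hz ▸ this)
            have h2 : (List.replicate (k + 1) z).count z = k + 1 := by
              rw [List.count_replicate]
              simp
            rw [h2]
            have h3 : (∏ j : Fin n, m j.castSucc ((List.replicate (k + 1) z).count j.castSucc)) = 1 := by
              apply Finset.prod_eq_one
              intro j _
              rw [h1 j, (hA0 j.castSucc).1]
            rw [h3, one_mul, hz]
          rw [hprod] at hb
          refine le_trans hb ?_
          have h4 : (0:ℝ) ≤ A ^ (k + 1) * m z (k + 1) := by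
            have := (hmpos z (k + 1)).le
            positivity
          nlinarith [h4, norm_nonneg u]
  · rintro ⟨⟨C₁, A₁, hC₁, hA₁, hb1⟩, ⟨C₂, A₂, hC₂, hA₂, hb2⟩⟩
    set C : ℝ := max (max C₁ C₂) (‖u‖ + 1) with hCdef
    set A : ℝ := max 1 (max A₁ A₂) with hAdef
    have hCu : ‖u‖ + 1 ≤ C := le_max_right _ _
    have hC0 : 0 < C := lt_of_lt_of_le (by positivity) hCu
    have hCC₁ : C₁ ≤ C := le_trans (le_max_left C₁ C₂) (le_max_left _ _)
    have hCC₂ : C₂ ≤ C := le_trans (le_max_right C₁ C₂) (le_max_left _ _)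
    have hA1' : (1:ℝ) ≤ A := le_max_left _ _
    have hA0' : (0:ℝ) < A := lt_of_lt_of_le one_pos hA1'
    have hAA₁ : A₁ ≤ A := le_trans (le_max_left A₁ A₂) (le_max_right _ _)
    have hAA₂ : A₂ ≤ A := le_trans (le_max_right A₁ A₂) (le_max_right _ _)
    have hCC0 : (0:ℝ) < C * C := by positivity
    have h0 : ∀ i, m i 0 = 1 := fun i => (hA0 i).1
    have h1 : ∀ i, m i 1 = 1 := fun i => (hA0 i).2
    have hA1seq : ∀ i, ∀ p : ℕ, m i (p + 1) * m i (p + 1) ≤ m i p * m i (p + 2) := by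
      intro i p
      have h := hA1 i (p + 1) (by omega)
      simpa [pow_two] using h
    have hmmpos : ∀ (j : Fin n) (p : ℕ), 0 < (fun j : Fin n => m j.castSucc) j p :=
      fun j p => hmpos j.castSucc p
    have hmqpos : ∀ p, 0 < m z p := fun p => hmpos z p
    -- commutator norm bound
    set cB : ℝ := 1 + ∑ j, ‖c j‖ with hcBdef
    have hcB1 : (1:ℝ) ≤ cB := by
      have : (0:ℝ) ≤ ∑ j, ‖c j‖ := Finset.sum_nonneg fun j _ => norm_nonneg _
      rw [hcBdef]; linarith
    have hcB0' : (0:ℝ) ≤ cB := by linarith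
    have hcBj : ∀ j : Fin n, ‖c j‖ ≤ cB := by
      intro j
      have h2 : ‖c j‖ ≤ ∑ j', ‖c j'‖ :=
        Finset.single_le_sum (fun j' _ => norm_nonneg _) (Finset.mem_univ j)
      rw [hcBdef]; linarith
    -- the (A3) constant
    choose Lf hLf1 hLf3 using hA3
    set L : ℝ := 1 + ∑ j, Lf j with hLdef
    have hLsum : (0:ℝ) ≤ ∑ j, Lf j :=
      Finset.sum_nonneg fun j _ => le_trans zero_le_one (hLf1 j)
    have hL1 : (1:ℝ) ≤ L := by rw [hLdef]; linarith
    have hLfL : ∀ j, Lf j ≤ L := by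
      intro j
      have h2 : Lf j ≤ ∑ j', Lf j' :=
        Finset.single_le_sum (fun j' _ => le_trans zero_le_one (hLf1 j')) (Finset.mem_univ j)
      rw [hLdef]; linarith
    have hfact : ∀ (j : Fin n) (t : ℕ),
        (t.factorial : ℝ) ≤ L ^ t * m j.castSucc t * m z t := by
      intro j
      apply seq_factorial (m j.castSucc) (m z) (h0 _) (h0 _) L _ (by linarith)
        (fun p => hmpos z p) (fun p => hmpos j.castSucc p)
      intro p
      have h2 := hLf3 j (p + 1) (by omega)
      simp only [Nat.add_sub_cancel] at h2
      have h3 : Lf j * m j.castSucc (p + 1) * m z (p + 1) ≤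
          L * m j.castSucc (p + 1) * m z (p + 1) := by
        apply mul_le_mul_of_nonneg_right _ (hmpos z _).le
        exact mul_le_mul_of_nonneg_right (hLfL j) (hmpos _ _).le
      calc ((p + 1 : ℕ) : ℝ) * m j.castSucc p * m z p
          ≤ Lf j * m j.castSucc (p + 1) * m z (p + 1) := by
            convert h2 using 3 <;> push_cast <;> ring
        _ ≤ L * m j.castSucc (p + 1) * m z (p + 1) := h3
    -- pure word bounds with unified constants
    have hφψ : ∀ φ : List (Fin (n + 1)), (∀ i ∈ φ, i ≠ z) →
        ∃ ψ : List (Fin n), φ = ψ.map Fin.castSucc := by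
      intro φ
      induction φ with
      | nil => exact fun _ => ⟨[], rfl⟩
      | cons i φ ih =>
          intro h
          obtain ⟨ψ, hψ⟩ := ih fun x hx => h x (List.mem_cons_of_mem _ hx)
          obtain ⟨j, hj⟩ := Fin.exists_castSucc_eq.2 (h i (List.mem_cons_self))
          exact ⟨j :: ψ, by rw [List.map_cons, hj, hψ]⟩
    have PB1 : ∀ φ : List (Fin (n + 1)), (∀ i ∈ φ, i ≠ z) →
        ‖applyWord X φ u‖ ≤ C * A ^ φ.length *
          ∏ j : Fin n, m j.castSucc (φ.count j.castSucc) := by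
      intro φ hφ
      obtain ⟨ψ, rfl⟩ := hφψ φ hφ
      have hcnt : ∀ j : Fin n, (ψ.map Fin.castSucc).count j.castSucc = ψ.count j := fun j =>
        List.count_map_of_injective _ _ (Fin.castSucc_injective n) j
      have hprodpos : (0:ℝ) < ∏ j : Fin n, m j.castSucc ((ψ.map Fin.castSucc).count j.castSucc) :=
        Finset.prod_pos fun j _ => hmpos _ _
      by_cases hψ0 : ψ = []
      · subst hψ0
        simp only [List.map_nil, List.length_nil, pow_zero, mul_one]
        have hpp : ∏ j : Fin n, m j.castSucc (([] : List (Fin (n+1))).count j.castSucc) = 1 :=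
          Finset.prod_eq_one fun j _ => by simp [h0]
        have : applyWord X [] u = u := rfl
        rw [this, hpp, mul_one]
        linarith [norm_nonneg u, hCu]
      · have hb := hb1 ψ hψ0
        rw [← applyWord_map] at hb
        rw [List.length_map]
        refine le_trans hb ?_
        have hAp : A₁ ^ ψ.length ≤ A ^ ψ.length := pow_le_pow_left₀ hA₁.le hAA₁ _
        have hpr : (∏ j : Fin n, m j.castSucc (ψ.count j)) =
            ∏ j : Fin n, m j.castSucc ((ψ.map Fin.castSucc).count j.castSucc) :=
          Finset.prod_congr rfl fun j _ => by rw [hcnt j]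
        rw [← hpr]
        have hppos : (0:ℝ) < ∏ j : Fin n, m j.castSucc (ψ.count j) :=
          Finset.prod_pos fun j _ => hmpos _ _
        apply mul_le_mul _ le_rfl hppos.le (by positivity)
        apply mul_le_mul hCC₁ hAp (by positivity) hC0.le
    have PB2 : ∀ q : ℕ, ‖applyWord X (List.replicate q z) u‖ ≤ C * A ^ q * m z q := by
      intro q
      rw [applyWord_replicate]
      refine le_trans (hb2 q) ?_
      have hAp : A₂ ^ q ≤ A ^ q := pow_le_pow_left₀ hA₂.le hAA₂ _
      apply mul_le_mul _ le_rfl (hmpos z q).le (by positivity)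
      apply mul_le_mul hCC₂ hAp (by positivity) hC0.le
    have hmove := applyWord_inner_move X D hXD hherm
    -- base case: inversion-free words
    have hbase : ∀ γ : List (Fin (n + 1)), invc z γ = 0 →
        ‖(⟪u, applyWord X γ u⟫ : ℂ)‖ ≤
          NFB (C * C) A (fun j : Fin n => m j.castSucc) (m z)
            (fun j : Fin n => γ.count j.castSucc) (γ.count z) := by
      intro γ hγ0
      have hdec := invc_eq_zero z γ hγ0
      set φ := γ.filter (fun x => decide (x ≠ z)) with hφdef
      set b := γ.count z with hbdef
      have hφz : ∀ i ∈ φ, i ≠ z := by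
        intro i hi
        have := List.of_mem_filter hi
        simpa using this
      have hzφ : φ.count z = 0 := by
        rw [List.count_eq_zero]
        intro hmem
        exact hφz z hmem rfl
      have hv : applyWord X (List.replicate b z) u ∈ D := applyWord_mem X D hXD _ _ hu
      have heq1 : applyWord X γ u = applyWord X φ (applyWord X (List.replicate b z) u) := by
        conv_lhs => rw [hdec]
        rw [applyWord_append]
      have heq2 : ‖(⟪u, applyWord X γ u⟫ : ℂ)‖
          = ‖(⟪applyWord X φ.reverse u, applyWord X (List.replicate b z) u⟫ : ℂ)‖ := by
        rw [heq1]
        have h2 := hmove φ.reverse u hu (applyWord X (List.replicate b z) u) hv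
        rw [List.reverse_reverse] at h2
        exact h2.symm
      have hcntφ : ∀ j : Fin n, φ.count j.castSucc = γ.count j.castSucc := by
        intro j
        rw [hφdef]
        apply List.count_filter
        simp
        exact (Fin.castSucc_lt_last j).ne
      have hlenφ : φ.length = ∑ j : Fin n, γ.count j.castSucc := by
        have hsum := count_univ_sum φ
        rw [Fin.sum_univ_castSucc] at hsum
        rw [← hsum, hzφ, add_zero]
        exact Finset.sum_congr rfl fun j _ => hcntφ j
      rw [heq2]
      calc ‖(⟪applyWord X φ.reverse u, applyWord X (List.replicate b z) u⟫ : ℂ)‖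
          ≤ ‖applyWord X φ.reverse u‖ * ‖applyWord X (List.replicate b z) u‖ :=
            norm_inner_le_norm _ _
        _ ≤ (C * A ^ φ.reverse.length *
              ∏ j : Fin n, m j.castSucc (φ.reverse.count j.castSucc)) * (C * A ^ b * m z b) := by
            apply mul_le_mul (PB1 φ.reverse ?_) (PB2 b) (norm_nonneg _) ?_
            · intro i hi
              exact hφz i (List.mem_reverse.1 hi)
            · have hpp : (0:ℝ) < ∏ j : Fin n, m j.castSucc (φ.reverse.count j.castSucc) :=
                Finset.prod_pos fun j _ => hmpos _ _
              positivity
        _ = NFB (C * C) A (fun j : Fin n => m j.castSucc) (m z)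
              (fun j : Fin n => γ.count j.castSucc) b := by
            unfold NFB
            rw [List.length_reverse, hlenφ]
            have hcr : ∀ j : Fin n, φ.reverse.count j.castSucc = γ.count j.castSucc := by
              intro j
              rw [List.count_reverse]
              exact hcntφ j
            have : (∏ j : Fin n, m j.castSucc (φ.reverse.count j.castSucc)) =
                ∏ j : Fin n, m j.castSucc (γ.count j.castSucc) :=
              Finset.prod_congr rfl fun j _ => by rw [hcr j]
            rw [this, pow_add]
            ring
    -- main induction on words
    have main : ∀ N : ℕ, ∀ γ : List (Fin (n + 1)), γ.length ^ 3 + invc z γ ≤ N →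
        ‖(⟪u, applyWord X γ u⟫ : ℂ)‖ ≤
          SB (C * C) A cB (fun j : Fin n => m j.castSucc) (m z) (invc z γ)
            (fun j : Fin n => γ.count j.castSucc) (γ.count z) := by
      intro N
      induction N with
      | zero =>
          intro γ hγ
          have hγ0 : invc z γ = 0 := by omega
          exact le_trans (hbase γ hγ0) (NFB_le_SB hCC0 hA0' hcB0' hmmpos hmqpos _ _ _)
      | succ N ih =>
          intro γ hγ
          by_cases hγ0 : invc z γ = 0
          · exact le_trans (hbase γ hγ0) (NFB_le_SB hCC0 hA0' hcB0' hmmpos hmqpos _ _ _)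
          · obtain ⟨σ, i, τ, hiz, hdec⟩ := invc_pos z γ (by omega)
            obtain ⟨j, hj⟩ := Fin.exists_castSucc_eq.2 hiz
            have hw : applyWord X τ u ∈ D := applyWord_mem X D hXD τ u hu
            have hcommw : X z (X i (applyWord X τ u)) =
                X i (X z (applyWord X τ u)) - c j • applyWord X τ u := by
              have h := hcomm j (applyWord X τ u) hw
              rw [hj] at h
              rw [← h]
              abel
            have hsplit : applyWord X γ u =
                applyWord X (σ ++ i :: z :: τ) u - c j • applyWord X (σ ++ τ) u := by
              rw [hdec, applyWord_append, applyWord_append, applyWord_append]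
              rw [applyWord_cons, applyWord_cons, applyWord_cons, applyWord_cons]
              rw [hcommw]
              exact applyWord_sub_smul X σ _ _ _
            have hΨ : ‖(⟪u, applyWord X γ u⟫ : ℂ)‖ ≤
                ‖(⟪u, applyWord X (σ ++ i :: z :: τ) u⟫ : ℂ)‖ +
                  cB * ‖(⟪u, applyWord X (σ ++ τ) u⟫ : ℂ)‖ := by
              rw [hsplit, inner_sub_right, inner_smul_right]
              refine le_trans (norm_sub_le _ _) ?_
              apply add_le_add le_rfl
              rw [norm_mul]
              apply mul_le_mul_of_nonneg_right (hcBj j) (norm_nonneg _)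
            -- bookkeeping
            have hlen' : (σ ++ i :: z :: τ).length = γ.length := by
              rw [hdec]; simp
            have hlen'' : γ.length = (σ ++ τ).length + 2 := by
              rw [hdec]; simp; omega
            have ecp1 : (z :: i :: τ).countP (fun x => decide (x ≠ z)) =
                τ.countP (fun x => decide (x ≠ z)) + 1 := by
              rw [List.countP_cons_of_neg (p := fun x => decide (x ≠ z)) (by simp),
                List.countP_cons_of_pos (p := fun x => decide (x ≠ z)) (by simp [hiz])]
            have ecp2 : (i :: z :: τ).countP (fun x => decide (x ≠ z)) =
                τ.countP (fun x => decide (x ≠ z)) + 1 := by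
              rw [List.countP_cons_of_pos (p := fun x => decide (x ≠ z)) (by simp [hiz]),
                List.countP_cons_of_neg (p := fun x => decide (x ≠ z)) (by simp)]
            have ecp3 : (i :: τ).countP (fun x => decide (x ≠ z)) =
                τ.countP (fun x => decide (x ≠ z)) + 1 :=
              List.countP_cons_of_pos (p := fun x => decide (x ≠ z)) (by simp [hiz])
            have e5 : invc z (i :: τ) = invc z τ := by
              rw [invc_cons, if_neg hiz, zero_add]
            have e6 : invc z (z :: τ) = τ.countP (fun x => decide (x ≠ z)) + invc z τ := by
              rw [invc_cons, if_pos rfl]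
            have e7 : invc z (z :: i :: τ) =
                (τ.countP (fun x => decide (x ≠ z)) + 1) + invc z τ := by
              rw [invc_cons, if_pos rfl, ecp3, e5]
            have e8 : invc z (i :: z :: τ) =
                τ.countP (fun x => decide (x ≠ z)) + invc z τ := by
              rw [invc_cons, if_neg hiz, zero_add, e6]
            have hinv1 : invc z γ = invc z (σ ++ i :: z :: τ) + 1 := by
              rw [hdec, invc_append, invc_append, e7, e8, ecp1, ecp2]
              omega
            have hinv2 : invc z (σ ++ τ) ≤ invc z (σ ++ i :: z :: τ) := by
              rw [invc_append, invc_append, e8, ecp2]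
              have h3 : σ.count z * τ.countP (fun x => decide (x ≠ z)) ≤
                  σ.count z * (τ.countP (fun x => decide (x ≠ z)) + 1) :=
                Nat.mul_le_mul_left _ (by omega)
              omega
            have hcz1 : (σ ++ i :: z :: τ).count z = γ.count z := by
              rw [hdec, List.count_append, List.count_append]
              simp [List.count_cons, hiz]
            have hcz2 : γ.count z = (σ ++ τ).count z + 1 := by
              rw [hdec, List.count_append, List.count_append]
              simp [List.count_cons, hiz]
              omega
            have hca1 : (fun j' : Fin n => (σ ++ i :: z :: τ).count j'.castSucc) =
                fun j' : Fin n => γ.count j'.castSucc := by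
              funext j'
              rw [hdec, List.count_append, List.count_append]
              simp [List.count_cons]
              omega
            have hca2 : (fun j' : Fin n => γ.count j'.castSucc) =
                (fun j' : Fin n => (σ ++ τ).count j'.castSucc) + Pi.single j 1 := by
              funext j'
              simp only [Pi.add_apply]
              rw [hdec, List.count_append, List.count_append]
              have hne1 : z ≠ j'.castSucc := by
                rw [hz]
                exact fun h => (Fin.castSucc_lt_last j').ne h.symm
              by_cases hj' : j' = j
              · subst hj'
                rw [Pi.single_eq_same]
                simp [List.count_cons, hne1, hj.symm]
                omega
              · rw [Pi.single_eq_of_ne hj']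
                have hne2 : i ≠ j'.castSucc := by
                  intro hcontra
                  exact hj' (Fin.castSucc_injective n (hcontra.symm.trans hj.symm))
                simp [List.count_cons, hne1, hne2]
            -- induction hypotheses
            have hm1 : (σ ++ i :: z :: τ).length ^ 3 + invc z (σ ++ i :: z :: τ) ≤ N := by
              rw [hlen']
              omega
            have hm2 : (σ ++ τ).length ^ 3 + invc z (σ ++ τ) ≤ N := by
              have hsq := invc_le_sq z (σ ++ τ)
              set s := (σ ++ τ).length with hs
              have hcube : (s + 2) ^ 3 ≤ N + 1 := by
                rw [← hlen'']
                omega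
              nlinarith [hsq, hcube]
            have ih1 := ih (σ ++ i :: z :: τ) hm1
            have ih2 := ih (σ ++ τ) hm2
            rw [hca1, hcz1, hca2, hcz2] at ih1
            rw [hca2, hcz2, hinv1]
            -- combine
            calc ‖(⟪u, applyWord X γ u⟫ : ℂ)‖
                ≤ ‖(⟪u, applyWord X (σ ++ i :: z :: τ) u⟫ : ℂ)‖ +
                  cB * ‖(⟪u, applyWord X (σ ++ τ) u⟫ : ℂ)‖ := hΨ
              _ ≤ SB (C * C) A cB (fun j : Fin n => m j.castSucc) (m z)
                    (invc z (σ ++ i :: z :: τ))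
                    ((fun j' : Fin n => (σ ++ τ).count j'.castSucc) + Pi.single j 1)
                    ((σ ++ τ).count z + 1) +
                  cB * SB (C * C) A cB (fun j : Fin n => m j.castSucc) (m z)
                    (invc z (σ ++ τ)) (fun j' : Fin n => (σ ++ τ).count j'.castSucc)
                    ((σ ++ τ).count z) := by
                  apply add_le_add ih1
                  exact mul_le_mul_of_nonneg_left ih2 (by linarith)
              _ ≤ SB (C * C) A cB (fun j : Fin n => m j.castSucc) (m z)
                    (invc z (σ ++ i :: z :: τ) + 1)
                    ((fun j' : Fin n => (σ ++ τ).count j'.castSucc) + Pi.single j 1)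
                    ((σ ++ τ).count z + 1) :=
                  SB_step hCC0 hA0' hcB0' hmmpos hmqpos
                    (invc z (σ ++ i :: z :: τ)) (invc z (σ ++ τ)) hinv2
                    (fun j' : Fin n => (σ ++ τ).count j'.castSucc) ((σ ++ τ).count z) j
    -- absorbed mixed bound
    set K : ℝ := 8 * A * cB * L * Real.exp (2 * n) with hKdef
    have hK0 : (0:ℝ) < K := by
      have := Real.exp_pos (2 * (n:ℝ))
      rw [hKdef]; positivity
    have hmixed : ∀ γ : List (Fin (n + 1)),
        ‖(⟪u, applyWord X γ u⟫ : ℂ)‖ ≤ (C * C) * K ^ γ.length * ∏ i, m i (γ.count i) := by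
      intro γ
      have hpart : (∑ j : Fin n, γ.count j.castSucc) + γ.count z = γ.length := by
        have := count_univ_sum γ
        rw [Fin.sum_univ_castSucc] at this
        rw [← this, hz]
      have h2 := SB_absorb hCC0 hA0' hmmpos hmqpos hA1' hcB1 L hL1
        (fun j => h0 j.castSucc) (fun j => h1 j.castSucc) (fun j p => hA1seq j.castSucc p)
        (h0 z) (h1 z) (fun p => hA1seq z p) hfact
        (invc z γ) γ.length (invc_le_sq z γ)
        (fun j : Fin n => γ.count j.castSucc) (γ.count z) hpart
      refine le_trans (main (γ.length ^ 3 + invc z γ) γ le_rfl) (le_trans h2 (le_of_eq ?_))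
      rw [hKdef]
      have hpr : (∏ j : Fin n, m j.castSucc (γ.count j.castSucc)) * m z (γ.count z) =
          ∏ i, m i (γ.count i) := by
        rw [Fin.prod_univ_castSucc (f := fun i => m i (γ.count i)), hz]
      rw [← hpr]
      ring
    -- (A2) halving constants
    choose Hf hHf0 hHf2 using hA2
    set HH : ℝ := 1 + ∑ i, Hf i with hHHdef
    have hHsum : (0:ℝ) ≤ ∑ i, Hf i := Finset.sum_nonneg fun i _ => (hHf0 i).le
    have hHH1 : (1:ℝ) ≤ HH := by rw [hHHdef]; linarith
    have hHfH : ∀ i, Hf i ≤ HH := by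
      intro i
      have h2 : Hf i ≤ ∑ i', Hf i' :=
        Finset.single_le_sum (fun i' _ => (hHf0 i').le) (Finset.mem_univ i)
      rw [hHHdef]; linarith
    refine ⟨Real.sqrt (C * C), K * HH, Real.sqrt_pos.2 hCC0, by positivity, ?_⟩
    intro α hα
    have hself : ‖applyWord X α u‖ ^ 2 = ‖(⟪u, applyWord X (α.reverse ++ α) u⟫ : ℂ)‖ := by
      have h2 := hmove α u hu (applyWord X α u) (applyWord_mem X D hXD α u hu)
      rw [applyWord_append, ← h2, inner_self_eq_norm_sq_to_K]
      rw [norm_pow, RCLike.norm_ofReal, abs_norm]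
    have hcnt2 : ∀ i, (α.reverse ++ α).count i = 2 * α.count i := by
      intro i
      rw [List.count_append, List.count_reverse]
      omega
    have hlen2 : (α.reverse ++ α).length = 2 * α.length := by
      rw [List.length_append, List.length_reverse]
      omega
    have h3 := hmixed (α.reverse ++ α)
    rw [hlen2] at h3
    have hprodle : (∏ i, m i ((α.reverse ++ α).count i)) ≤
        HH ^ (2 * α.length) * (∏ i, m i (α.count i)) ^ 2 := by
      calc (∏ i, m i ((α.reverse ++ α).count i))
          = ∏ i, m i (2 * α.count i) := Finset.prod_congr rfl fun i _ => by rw [hcnt2 i]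
        _ ≤ ∏ i, (HH ^ (2 * α.count i) * (m i (α.count i)) ^ 2) := by
            apply Finset.prod_le_prod
            · intro i _; exact (hmpos i _).le
            · intro i _
              have h4 := hHf2 i (α.count i) (α.count i)
              have h5 : Hf i ^ (α.count i + α.count i) ≤ HH ^ (α.count i + α.count i) :=
                pow_le_pow_left₀ (hHf0 i).le (hHfH i) _
              have h6 : 2 * α.count i = α.count i + α.count i := by omega
              rw [h6]
              calc m i (α.count i + α.count i)
                  ≤ Hf i ^ (α.count i + α.count i) * m i (α.count i) * m i (α.count i) := h4
                _ ≤ HH ^ (α.count i + α.count i) * m i (α.count i) * m i (α.count i) := by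
                    apply mul_le_mul_of_nonneg_right _ (hmpos i _).le
                    exact mul_le_mul_of_nonneg_right h5 (hmpos i _).le
                _ = HH ^ (α.count i + α.count i) * (m i (α.count i)) ^ 2 := by ring
        _ = (∏ i, HH ^ (2 * α.count i)) * ∏ i, (m i (α.count i)) ^ 2 := by
            rw [Finset.prod_mul_distrib]
        _ = HH ^ (2 * α.length) * (∏ i, m i (α.count i)) ^ 2 := by
            rw [Finset.prod_pow_eq_pow_sum, Finset.prod_pow]
            congr 1
            rw [← Finset.mul_sum, count_univ_sum]
    have hsq : ‖applyWord X α u‖ ^ 2 ≤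
        (Real.sqrt (C * C) * (K * HH) ^ α.length * ∏ i, m i (α.count i)) ^ 2 := by
      have hrhs : (Real.sqrt (C * C) * (K * HH) ^ α.length * ∏ i, m i (α.count i)) ^ 2 =
          (C * C) * (K ^ (2 * α.length) * (HH ^ (2 * α.length) *
            (∏ i, m i (α.count i)) ^ 2)) := by
        have h9 : Real.sqrt (C * C) ^ 2 = C * C := Real.sq_sqrt hCC0.le
        have h10 : ((K * HH) ^ α.length) ^ 2 = K ^ (2 * α.length) * HH ^ (2 * α.length) := by
          rw [← pow_mul, show α.length * 2 = 2 * α.length from Nat.mul_comm _ _, mul_pow]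
        rw [mul_pow, mul_pow, h9, h10]
        ring
      rw [hself, hrhs]
      calc ‖(⟪u, applyWord X (α.reverse ++ α) u⟫ : ℂ)‖
          ≤ (C * C) * K ^ (2 * α.length) * ∏ i, m i ((α.reverse ++ α).count i) := h3
        _ ≤ (C * C) * K ^ (2 * α.length) *
            (HH ^ (2 * α.length) * (∏ i, m i (α.count i)) ^ 2) := by
            apply mul_le_mul_of_nonneg_left hprodle (by positivity)
        _ = (C * C) * (K ^ (2 * α.length) * (HH ^ (2 * α.length) *
            (∏ i, m i (α.count i)) ^ 2)) := by ring
    have hrfl : Real.sqrt (‖applyWord X α u‖ ^ 2) = ‖applyWord X α u‖ :=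
      Real.sqrt_sq (norm_nonneg _)
    have hrhsnn : (0:ℝ) ≤ Real.sqrt (C * C) * (K * HH) ^ α.length * ∏ i, m i (α.count i) := by
      have : (0:ℝ) ≤ ∏ i, m i (α.count i) := Finset.prod_nonneg fun i _ => (hmpos i _).le
      positivity
    have hfin := Real.sqrt_le_sqrt hsq
    rw [hrfl, Real.sqrt_sq hrhsnn] at hfin
    exact hfin
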